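/- arXiv:2211.12564 — 2 statements merged into one kernel-verified Lean document; each statement's English description precedes it below -/
import Mathlib

section
/- (Nikolskii inequality on the torus) Let 0 < p < q ≤ ∞. There is a constant C depending only on p, q, d such that every trigonometric polynomial T_n of degree at most n on T^d satisfies ‖T_n‖_{L_q(T^d)} ≤ C n^{d(1/p − 1/q)} ‖T_n‖_{L_p(T^d)}. -/
/-!
A trigonometric polynomial `S` of degree `N` is the sum of its Fourier series, and each Fourier
coefficient is at most `(2π)^{-d} ‖S‖₁`, so `‖S‖_∞ ≤ (2N+1)^d (2π)^{-d} ‖S‖₁`. For `r ≤ 1` the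
interpolation `‖S‖₁ ≤ ‖S‖_∞^{1-r} ‖S‖_r^r` upgrades this to `‖S‖_∞ ≤ K^{1/r} ‖S‖_r`. Applied to
`S^m`, of degree `m N`, with `m = ⌈p⌉` and `r = p / m`, it gives `‖S‖_∞ ≲ N^{d/p} ‖S‖_p`, and
`‖S‖_q ≤ ‖S‖_∞^{1-p/q} ‖S‖_p^{p/q}` finishes the proof.
-/

open MeasureTheory Real ENNReal

noncomputable section

/-- The fundamental domain `[0, 2π]^d` of the torus `T^d = ℝ^d / 2πℤ^d`. -/
def torusBox (d : ℕ) : Set (Fin d → ℝ) := Set.Icc 0 (fun _ => 2 * π)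

/-- The character `e^{i(k,x)}` on the torus. -/
def eK {d : ℕ} (k : Fin d → ℤ) (x : Fin d → ℝ) : ℂ :=
  Complex.exp (Complex.I * ((∑ j, (k j : ℝ) * x j : ℝ) : ℂ))

section LpInterpolation

variable {α E : Type*} [MeasurableSpace α] {μ : Measure α} [NormedAddCommGroup E] {f : α → E}

theorem lintegral_enorm_rpow_le_eLpNormEssSup_rpow_mul (hf : AEStronglyMeasurable f μ)
    {p q : ℝ} (hp : 0 ≤ p) (hpq : p ≤ q) :
    ∫⁻ x, ‖f x‖ₑ ^ q ∂μ ≤ eLpNormEssSup f μ ^ (q - p) * ∫⁻ x, ‖f x‖ₑ ^ p ∂μ := by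
  rw [← lintegral_const_mul'' _ (hf.enorm.pow_const p)]
  refine lintegral_mono_ae ((enorm_ae_le_eLpNormEssSup f μ).mono fun x hx => ?_)
  calc ‖f x‖ₑ ^ q = ‖f x‖ₑ ^ (q - p) * ‖f x‖ₑ ^ p := by
        rw [← ENNReal.rpow_add_of_nonneg _ _ (sub_nonneg.2 hpq) hp, sub_add_cancel]
    _ ≤ eLpNormEssSup f μ ^ (q - p) * ‖f x‖ₑ ^ p := by
        gcongr

theorem eLpNorm_le_eLpNorm_top_rpow_mul_eLpNorm_rpow (hf : AEStronglyMeasurable f μ)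
    {p q : ℝ≥0∞} (hp0 : p ≠ 0) (hp : p ≠ ⊤) (hpq : p ≤ q) :
    eLpNorm f q μ ≤
      eLpNorm f ⊤ μ ^ (1 - p.toReal / q.toReal) * eLpNorm f p μ ^ (p.toReal / q.toReal) := by
  rcases eq_or_ne q ⊤ with rfl | hq
  · simp
  have hq0 : q ≠ 0 := (pos_iff_ne_zero.2 hp0 |>.trans_le hpq).ne'
  have hp' : 0 < p.toReal := ENNReal.toReal_pos hp0 hp
  have hpq' : p.toReal ≤ q.toReal := ENNReal.toReal_mono hq hpq
  have hq' : 0 < q.toReal := hp'.trans_le hpq'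
  rw [eLpNorm_eq_lintegral_rpow_enorm_toReal hp0 hp,
    eLpNorm_eq_lintegral_rpow_enorm_toReal hq0 hq,
    eLpNorm_exponent_top, ← ENNReal.rpow_mul]
  calc (∫⁻ x, ‖f x‖ₑ ^ q.toReal ∂μ) ^ (1 / q.toReal)
      ≤ (eLpNormEssSup f μ ^ (q.toReal - p.toReal) * ∫⁻ x, ‖f x‖ₑ ^ p.toReal ∂μ) ^
          (1 / q.toReal) := by
        gcongr
        exact lintegral_enorm_rpow_le_eLpNormEssSup_rpow_mul hf hp'.le hpq'
    _ = _ := by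
        rw [ENNReal.mul_rpow_of_nonneg _ _ (by positivity), ← ENNReal.rpow_mul]
        congr 2 <;> field_simp

theorem eLpNorm_le_rpow_mul_of_eLpNorm_top_le (hf : AEStronglyMeasurable f μ)
    {p q : ℝ≥0∞} (hp0 : p ≠ 0) (hp : p ≠ ⊤) (hpq : p ≤ q) {B : ℝ≥0∞}
    (hB : eLpNorm f ⊤ μ ≤ B ^ (1 / p.toReal) * eLpNorm f p μ) :
    eLpNorm f q μ ≤ B ^ (1 / p.toReal - 1 / q.toReal) * eLpNorm f p μ := by
  set θ := p.toReal / q.toReal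
  have hp' : 0 < p.toReal := ENNReal.toReal_pos hp0 hp
  have hθ0 : 0 ≤ θ := by positivity
  have hθ1 : θ ≤ 1 := by
    rcases eq_or_ne q ⊤ with rfl | hq
    · simp [θ]
    · exact div_le_one_of_le₀ (ENNReal.toReal_mono hq hpq) ENNReal.toReal_nonneg
  have hexp : 1 / p.toReal * (1 - θ) = 1 / p.toReal - 1 / q.toReal := by
    field_simp
    ring
  calc eLpNorm f q μ ≤ eLpNorm f ⊤ μ ^ (1 - θ) * eLpNorm f p μ ^ θ :=
        eLpNorm_le_eLpNorm_top_rpow_mul_eLpNorm_rpow hf hp0 hp hpq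
    _ ≤ (B ^ (1 / p.toReal) * eLpNorm f p μ) ^ (1 - θ) * eLpNorm f p μ ^ θ := by
        gcongr
    _ = B ^ (1 / p.toReal - 1 / q.toReal) * eLpNorm f p μ := by
        rw [ENNReal.mul_rpow_of_nonneg _ _ (by linarith), mul_assoc, ← ENNReal.rpow_mul, hexp,
          ← ENNReal.rpow_add_of_nonneg _ _ (by linarith) hθ0, sub_add_cancel, ENNReal.rpow_one]

theorem eLpNorm_top_le_of_eLpNorm_top_le_eLpNorm_one (hf : MemLp f 1 μ) {K : ℝ≥0∞}
    (hK : K ≠ ⊤) (hfK : eLpNorm f ⊤ μ ≤ K * eLpNorm f 1 μ) {r : ℝ≥0∞} (hr0 : r ≠ 0) (hr1 : r ≤ 1) :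
    eLpNorm f ⊤ μ ≤ K ^ (1 / r.toReal) * eLpNorm f r μ := by
  set A := eLpNorm f ⊤ μ
  have hr' : 0 < r.toReal := ENNReal.toReal_pos hr0 (ne_top_of_le_ne_top one_ne_top hr1)
  have hr'1 : r.toReal ≤ 1 := ENNReal.toReal_le_of_le_ofReal zero_le_one (by simpa using hr1)
  have hA : A ≠ ⊤ := (hfK.trans_lt (ENNReal.mul_lt_top hK.lt_top hf.eLpNorm_lt_top)).ne
  rcases eq_or_ne A 0 with hA0 | hA0
  · simp [hA0]
  have hAr : A ^ (1 - r.toReal) ≠ 0 := (ENNReal.rpow_pos (pos_iff_ne_zero.2 hA0) hA).ne'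
  have hAr' : A ^ (1 - r.toReal) ≠ ⊤ := ENNReal.rpow_ne_top_of_nonneg (by linarith) hA
  have hL1 := eLpNorm_le_eLpNorm_top_rpow_mul_eLpNorm_rpow hf.1 hr0
    (ne_top_of_le_ne_top one_ne_top hr1) hr1
  simp only [ENNReal.toReal_one, div_one] at hL1
  have key : A ^ r.toReal ≤ K * eLpNorm f r μ ^ r.toReal := by
    refine (ENNReal.mul_le_mul_iff_left hAr hAr').1 ?_
    calc A ^ r.toReal * A ^ (1 - r.toReal) = A := by
          rw [← ENNReal.rpow_add_of_nonneg _ _ hr'.le (by linarith), add_sub_cancel,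
            ENNReal.rpow_one]
      _ ≤ K * (A ^ (1 - r.toReal) * eLpNorm f r μ ^ r.toReal) := hfK.trans (by gcongr)
      _ = K * eLpNorm f r μ ^ r.toReal * A ^ (1 - r.toReal) := by ring
  calc A = (A ^ r.toReal) ^ (1 / r.toReal) := by
        rw [← ENNReal.rpow_mul, mul_one_div_cancel hr'.ne', ENNReal.rpow_one]
    _ ≤ (K * eLpNorm f r μ ^ r.toReal) ^ (1 / r.toReal) := by gcongr
    _ = K ^ (1 / r.toReal) * eLpNorm f r μ := by
        rw [ENNReal.mul_rpow_of_nonneg _ _ (by positivity), ← ENNReal.rpow_mul,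
          mul_one_div_cancel hr'.ne', ENNReal.rpow_one]

theorem eLpNorm_pow_div {𝕜 : Type*} [NormedDivisionRing 𝕜] (f : α → 𝕜) (p : ℝ≥0∞) {m : ℕ}
    (hm : m ≠ 0) : eLpNorm (f ^ m) (p / m) μ = eLpNorm f p μ ^ m := by
  have hm' : (0 : ℝ) < m := by positivity
  calc eLpNorm (f ^ m) (p / m) μ = eLpNorm (fun x => ‖f x‖ ^ (m : ℝ)) (p / m) μ :=
        eLpNorm_congr_norm_ae <| ae_of_all _ fun x => by
          rw [Real.norm_of_nonneg (by positivity), Real.rpow_natCast, Pi.pow_apply, norm_pow]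
    _ = eLpNorm f p μ ^ m := by
        rw [eLpNorm_norm_rpow f hm', ENNReal.ofReal_natCast,
          ENNReal.div_mul_cancel (Nat.cast_ne_zero.2 hm) (natCast_ne_top m), ENNReal.rpow_natCast]

end LpInterpolation

section Torus

variable {d : ℕ}

theorem eK_add (k l : Fin d → ℤ) (x : Fin d → ℝ) : eK (k + l) x = eK k x * eK l x := by
  simp only [eK, ← Complex.exp_add, Pi.add_apply, Int.cast_add, add_mul, Finset.sum_add_distrib]
  push_cast
  ring_nf

theorem eK_mul_eK (k l : Fin d → ℤ) : eK k * eK l = eK (k + l) :=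
  funext fun x => (eK_add k l x).symm

theorem eK_zero : eK (0 : Fin d → ℤ) = 1 := by
  ext x
  simp [eK]

theorem norm_eK (k : Fin d → ℤ) (x : Fin d → ℝ) : ‖eK k x‖ = 1 := by
  simp [eK, Complex.norm_exp]

theorem continuous_eK (k : Fin d → ℤ) : Continuous (eK k) := by
  unfold eK
  fun_prop

theorem integrableOn_torusBox {E : Type*} [NormedAddCommGroup E] {f : (Fin d → ℝ) → E}
    (hf : Continuous f) : IntegrableOn f (torusBox d) :=
  hf.integrableOn_Icc

theorem eK_eq_prod (k : Fin d → ℤ) (x : Fin d → ℝ) :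
    eK k x = ∏ j, Complex.exp (Complex.I * k j * x j) := by
  rw [eK, ← Complex.exp_sum]
  push_cast
  simp_rw [Finset.mul_sum, mul_assoc]

theorem integral_Icc_exp_int_mul_I (l : ℤ) :
    ∫ t in Set.Icc 0 (2 * π), Complex.exp (Complex.I * l * t) =
      if l = 0 then (2 * π : ℂ) else 0 := by
  rw [integral_Icc_eq_integral_Ioc, ← intervalIntegral.integral_of_le (by positivity)]
  split_ifs with hl
  · simp [hl]
  have hc : Complex.I * l ≠ 0 := by simp [hl]
  have hper : Complex.exp (Complex.I * l * (2 * π : ℝ)) = 1 := by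
    rw [← Complex.exp_int_mul_two_pi_mul_I l]
    push_cast
    ring_nf
  rw [integral_exp_mul_complex hc, hper]
  simp

theorem torusBox_eq_pi : torusBox d = Set.univ.pi fun _ => Set.Icc 0 (2 * π) :=
  (Set.pi_univ_Icc _ _).symm

theorem integral_eK (k : Fin d → ℤ) :
    ∫ x in torusBox d, eK k x = if k = 0 then (2 * π : ℂ) ^ d else 0 := by
  rw [torusBox_eq_pi, volume_pi, Measure.restrict_pi_pi]
  simp_rw [eK_eq_prod]
  rw [integral_fintype_prod_eq_prod (fun j (t : ℝ) => Complex.exp (Complex.I * k j * t))]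
  simp_rw [integral_Icc_exp_int_mul_I]
  split_ifs with hk
  · simp [hk]
  · obtain ⟨j, hj⟩ := Function.ne_iff.1 hk
    exact Finset.prod_eq_zero (Finset.mem_univ j) (if_neg hj)

def boxFinset (d N : ℕ) : Finset (Fin d → ℤ) :=
  Fintype.piFinset fun _ => Finset.Icc (-N : ℤ) N

theorem mem_boxFinset {N : ℕ} {k : Fin d → ℤ} : k ∈ boxFinset d N ↔ ∀ j, |k j| ≤ N := by
  simp [boxFinset, abs_le]

theorem card_boxFinset (N : ℕ) : (boxFinset d N).card = (2 * N + 1) ^ d := by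
  simp only [boxFinset, Fintype.card_piFinset, Int.card_Icc, Finset.prod_const, Finset.card_univ,
    Fintype.card_fin]
  congr 1
  omega

theorem add_mem_boxFinset {N M : ℕ} {k l : Fin d → ℤ} (hk : k ∈ boxFinset d N)
    (hl : l ∈ boxFinset d M) : k + l ∈ boxFinset d (N + M) := by
  rw [mem_boxFinset] at *
  intro j
  push_cast
  exact (abs_add_le _ _).trans (add_le_add (hk j) (hl j))

def trigPoly (d N : ℕ) : Submodule ℂ ((Fin d → ℝ) → ℂ) :=
  Submodule.span ℂ (eK '' boxFinset d N)

theorem mem_trigPoly_iff {N : ℕ} {S : (Fin d → ℝ) → ℂ} :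
    S ∈ trigPoly d N ↔ ∃ c : (Fin d → ℤ) → ℂ, ∑ k ∈ boxFinset d N, c k • eK k = S :=
  Submodule.mem_span_image_finset_iff_exists_fun' ℂ

theorem one_le_trigPoly_zero : 1 ≤ trigPoly d 0 := by
  rw [Submodule.one_eq_span, trigPoly, ← eK_zero]
  exact Submodule.span_mono <| Set.singleton_subset_iff.2 <|
    Set.mem_image_of_mem _ <| mem_boxFinset.2 fun j => by simp

theorem trigPoly_mul_le (N M : ℕ) : trigPoly d N * trigPoly d M ≤ trigPoly d (N + M) := by
  rw [trigPoly, trigPoly, Submodule.span_mul_span]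
  refine Submodule.span_mono ?_
  rintro _ ⟨_, ⟨k, hk, rfl⟩, _, ⟨l, hl, rfl⟩, rfl⟩
  exact ⟨k + l, add_mem_boxFinset hk hl, (eK_mul_eK k l).symm⟩

theorem trigPoly_pow_le (N m : ℕ) : trigPoly d N ^ m ≤ trigPoly d (m * N) := by
  induction m with
  | zero => simpa using one_le_trigPoly_zero
  | succ m ih =>
    rw [pow_succ, add_one_mul]
    exact (mul_le_mul' ih le_rfl).trans (trigPoly_mul_le _ _)

theorem pow_mem_trigPoly {N : ℕ} {S : (Fin d → ℝ) → ℂ} (hS : S ∈ trigPoly d N) (m : ℕ) :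
    S ^ m ∈ trigPoly d (m * N) :=
  trigPoly_pow_le N m (Submodule.pow_mem_pow _ hS m)

theorem continuous_of_mem_trigPoly {N : ℕ} {S : (Fin d → ℝ) → ℂ} (hS : S ∈ trigPoly d N) :
    Continuous S := by
  obtain ⟨c, rfl⟩ := mem_trigPoly_iff.1 hS
  rw [Finset.sum_fn]
  exact continuous_finsetSum _ fun k _ => (continuous_eK k).const_smul (c k)

theorem tsum_mem_trigPoly {N : ℕ} {c : (Fin d → ℤ) → ℂ}
    (hc : ∀ k : Fin d → ℤ, ¬ (∀ j, |k j| ≤ (N : ℤ)) → c k = 0) :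
    (fun x => ∑' k, c k * eK k x) ∈ trigPoly d N := by
  refine mem_trigPoly_iff.2 ⟨c, funext fun x => ?_⟩
  rw [Finset.sum_apply, tsum_eq_sum fun k hk => by rw [hc k (mt mem_boxFinset.2 hk), zero_mul]]
  rfl

theorem integral_sum_smul_eK_mul_eK_neg (s : Finset (Fin d → ℤ)) (c : (Fin d → ℤ) → ℂ)
    {k : Fin d → ℤ} (hk : k ∈ s) :
    ∫ x in torusBox d, (∑ m ∈ s, c m • eK m) x * eK (-k) x = (2 * π : ℂ) ^ d * c k := by
  simp_rw [Finset.sum_apply, Pi.smul_apply, smul_eq_mul, Finset.sum_mul, mul_assoc, ← eK_add]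
  rw [integral_finsetSum s fun m _ =>
    integrableOn_torusBox (f := fun x => c m * eK (m + -k) x)
      (continuous_const.mul (continuous_eK _))]
  simp_rw [integral_const_mul, integral_eK, add_neg_eq_zero, mul_ite, mul_zero]
  rw [Finset.sum_ite_eq' s k, if_pos hk, mul_comm]

theorem norm_le_of_mem_trigPoly {N : ℕ} {S : (Fin d → ℝ) → ℂ} (hS : S ∈ trigPoly d N)
    (x : Fin d → ℝ) :
    ‖S x‖ ≤ (2 * N + 1) ^ d / (2 * π) ^ d * ∫ y in torusBox d, ‖S y‖ := by
  obtain ⟨c, rfl⟩ := mem_trigPoly_iff.1 hS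
  set S := ∑ k ∈ boxFinset d N, c k • eK k
  have hcoef : ∀ k ∈ boxFinset d N, ‖c k‖ ≤ (∫ y in torusBox d, ‖S y‖) / (2 * π) ^ d := by
    intro k hk
    rw [le_div_iff₀ (by positivity)]
    calc ‖c k‖ * (2 * π) ^ d = ‖∫ y in torusBox d, S y * eK (-k) y‖ := by
          rw [integral_sum_smul_eK_mul_eK_neg _ c hk, norm_mul, norm_pow, Complex.norm_mul,
            Complex.norm_ofNat, Complex.norm_real, Real.norm_of_nonneg pi_pos.le, mul_comm]
      _ ≤ ∫ y in torusBox d, ‖S y * eK (-k) y‖ := norm_integral_le_integral_norm _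
      _ = ∫ y in torusBox d, ‖S y‖ := by simp_rw [norm_mul, norm_eK, mul_one]
  calc ‖S x‖ ≤ ∑ k ∈ boxFinset d N, ‖c k • eK k x‖ := by
        simp only [S, Finset.sum_apply, Pi.smul_apply]
        exact norm_sum_le _ _
    _ ≤ ∑ k ∈ boxFinset d N, (∫ y in torusBox d, ‖S y‖) / (2 * π) ^ d := by
        gcongr with k hk
        rw [norm_smul, norm_eK, mul_one]
        exact hcoef k hk
    _ = (2 * N + 1) ^ d / (2 * π) ^ d * ∫ y in torusBox d, ‖S y‖ := by
        rw [Finset.sum_const, card_boxFinset, nsmul_eq_mul]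
        push_cast
        ring

theorem eLpNorm_top_le_mul_eLpNorm_one_of_mem_trigPoly {N : ℕ} {S : (Fin d → ℝ) → ℂ}
    (hS : S ∈ trigPoly d N) :
    eLpNorm S ⊤ (volume.restrict (torusBox d)) ≤
      ENNReal.ofReal ((2 * N + 1) ^ d / (2 * π) ^ d) *
        eLpNorm S 1 (volume.restrict (torusBox d)) := by
  rw [eLpNorm_one_eq_lintegral_enorm, ← ofReal_integral_norm_eq_lintegral_enorm
    (integrableOn_torusBox (continuous_of_mem_trigPoly hS)), ← ofReal_mul (by positivity),
    eLpNorm_exponent_top]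
  exact eLpNormEssSup_le_of_ae_bound (ae_of_all _ (norm_le_of_mem_trigPoly hS))

theorem eLpNorm_top_le_of_mem_trigPoly {N : ℕ} {S : (Fin d → ℝ) → ℂ} (hS : S ∈ trigPoly d N)
    {p : ℝ≥0∞} (hp0 : p ≠ 0) {m : ℕ} (hpm : p ≤ m) :
    eLpNorm S ⊤ (volume.restrict (torusBox d)) ≤
      ENNReal.ofReal ((2 * (m * N : ℕ) + 1) ^ d / (2 * π) ^ d) ^ (1 / p.toReal) *
        eLpNorm S p (volume.restrict (torusBox d)) := by
  have hm : m ≠ 0 := by rintro rfl; exact hp0 (by simpa using hpm)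
  have hSm := pow_mem_trigPoly hS m
  have key := eLpNorm_top_le_of_eLpNorm_top_le_eLpNorm_one
    (memLp_one_iff_integrable.2 (integrableOn_torusBox (continuous_of_mem_trigPoly hSm)))
    ofReal_ne_top (eLpNorm_top_le_mul_eLpNorm_one_of_mem_trigPoly hSm)
    (r := p / m) (ENNReal.div_ne_zero.2 ⟨hp0, natCast_ne_top m⟩)
    (ENNReal.div_le_of_le_mul (by simpa using hpm))
  have htop := eLpNorm_pow_div (μ := volume.restrict (torusBox d)) S ⊤ hm
  rw [top_div_of_ne_top (natCast_ne_top m)] at htop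
  have hexp : 1 / (p / m).toReal = 1 / p.toReal * m := by
    rw [ENNReal.toReal_div, ENNReal.toReal_natCast]
    field_simp
  rw [htop, eLpNorm_pow_div S p hm, hexp, ENNReal.rpow_mul, ENNReal.rpow_natCast, ← mul_pow] at key
  exact (ENNReal.pow_le_pow_left_iff hm).1 key

end Torus

/-- Nikolskii inequality on the torus: for `0 < p < q ≤ ∞` there is a constant `C`
(depending only on `p, q, d`) such that every trigonometric polynomial `T` of degree at
most `n` satisfies `‖T‖_{L_q(T^d)} ≤ C n^{d(1/p - 1/q)} ‖T‖_{L_p(T^d)}`. -/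
theorem nikolskii_inequality_torus (d : ℕ) (p q : ℝ≥0∞) (hp : 0 < p) (hpq : p < q) :
    ∃ C : ℝ, ∀ (n : ℕ), 0 < n → ∀ (c : (Fin d → ℤ) → ℂ) (T : (Fin d → ℝ) → ℂ),
      (∀ k : Fin d → ℤ, ¬ (∀ j, |k j| ≤ (n : ℤ)) → c k = 0) →
      T = (fun x => ∑' k : Fin d → ℤ, c k * eK k x) →
      eLpNorm T q (volume.restrict (torusBox d)) ≤
        ENNReal.ofReal (C * (n : ℝ) ^ ((d : ℝ) * (1 / p.toReal - 1 / q.toReal))) *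
          eLpNorm T p (volume.restrict (torusBox d)) := by
  have hp_top : p ≠ ⊤ := hpq.ne_top
  set m := ⌈p.toReal⌉₊
  have hpm : p ≤ m :=
    (ENNReal.toReal_le_toReal hp_top (natCast_ne_top m)).1 (by simpa using Nat.le_ceil _)
  have hm : 0 < m := Nat.ceil_pos.2 (ENNReal.toReal_pos hp.ne' hp_top)
  set L : ℝ := (3 * m) ^ d / (2 * π) ^ d
  refine ⟨L ^ (1 / p.toReal - 1 / q.toReal), fun n hn c T hc hT => ?_⟩
  have hT : T ∈ trigPoly d n := hT ▸ tsum_mem_trigPoly hc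
  have hK : (2 * (m * n : ℕ) + 1 : ℝ) ^ d / (2 * π) ^ d ≤ L * n ^ d := by
    rw [div_mul_eq_mul_div, ← mul_pow]
    gcongr
    have : (1 : ℝ) ≤ m * n := by exact_mod_cast Nat.mul_pos hm hn
    push_cast
    linarith
  have hexp : 0 ≤ 1 / p.toReal - 1 / q.toReal := by
    rcases eq_or_ne q ⊤ with rfl | hq
    · simp
    · exact sub_nonneg.2 (one_div_le_one_div_of_le (ENNReal.toReal_pos hp.ne' hp_top)
        (ENNReal.toReal_mono hq hpq.le))
  calc eLpNorm T q (volume.restrict (torusBox d))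
      ≤ ENNReal.ofReal (L * n ^ d) ^ (1 / p.toReal - 1 / q.toReal) *
          eLpNorm T p (volume.restrict (torusBox d)) := by
        refine eLpNorm_le_rpow_mul_of_eLpNorm_top_le
          (continuous_of_mem_trigPoly hT).aestronglyMeasurable hp.ne' hp_top hpq.le
          ((eLpNorm_top_le_of_mem_trigPoly hT hp.ne' hpm).trans ?_)
        gcongr
    _ = _ := by
        rw [ENNReal.ofReal_rpow_of_nonneg (by positivity) hexp, Real.mul_rpow (by positivity)
          (by positivity), ← Real.rpow_natCast, ← Real.rpow_mul (Nat.cast_nonneg n)]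
end
end

section
/- Let 0 < p < 1 and α ∈ N (an integer). Then for every f ∈ L_p(T) and every δ > 0, the K-functional inf_{g ∈ W_p^α(T)} ( ‖f − g‖_{L_p(T)} + δ ‖g^{(α)}‖_{L_p(T)} ) is identically zero, where g^{(α)} is the α-th derivative and W_p^α(T) = {g ∈ L_1(T) : g absolutely continuous of order α−1 with g^{(α)} ∈ L_p(T)}. -/
/-
For `p < 1` a jump costs nothing in `L_p`: a smooth step of width `w` has
`∫ |τ'|^p ≈ w^(1-p) → 0`, and the moving average `τ ↦ s⁻¹ ∫_{x-s}^x τ` turns a step whose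
`n`-th derivative has small `p`-th power integral into one whose `(n+1)`-st derivative does
(losing only a factor `2 s^(-p)`). Approximate `f` in `L_p` by a continuous function, and that by
a staircase of such steps along a fine grid, returning to its initial value so that it
periodizes smoothly. This gives smooth `2π`-periodic `g` with `‖f - g‖_p` and `‖g^(α)‖_p`
both arbitrarily small.
-/

open MeasureTheory Real ENNReal intervalIntegral

noncomputable section

open Filter Topology Set Function
open scoped ContDiff

section PowerSubadditivity

variable {p : ℝ}

theorem ENNReal.rpow_sum_le_sum_rpow {ι : Type*} (s : Finset ι) (f : ι → ℝ≥0∞) (hp0 : 0 < p)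
    (hp1 : p ≤ 1) : (∑ i ∈ s, f i) ^ p ≤ ∑ i ∈ s, f i ^ p := by
  classical
  induction s using Finset.induction_on with
  | empty => simp [ENNReal.zero_rpow_of_pos hp0]
  | insert a s has ih =>
    rw [Finset.sum_insert has, Finset.sum_insert has]
    exact (ENNReal.rpow_add_le_add_rpow _ _ hp0.le hp1).trans (add_le_add_right ih _)

theorem ENNReal.exists_pos_rpow_lt (hp : 0 < p) {ε : ℝ≥0∞} (hε : 0 < ε) :
    ∃ c : ℝ≥0∞, 0 < c ∧ c ^ p < ε := by
  have : Tendsto (fun c : ℝ≥0∞ => c ^ p) (𝓝[>] 0) (𝓝 0) := by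
    simpa [ENNReal.zero_rpow_of_pos hp] using
      ((ENNReal.continuous_rpow_const : Continuous fun c : ℝ≥0∞ => c ^ p).tendsto 0).mono_left
        nhdsWithin_le_nhds
  exact ((this.eventually (gt_mem_nhds hε)).and self_mem_nhdsWithin).exists.imp
    fun c hc => ⟨hc.2, hc.1⟩

variable {E : Type*} [NormedAddCommGroup E]

theorem enorm_sum_rpow_le {ι : Type*} (s : Finset ι) (F : ι → E) (hp0 : 0 < p) (hp1 : p ≤ 1) :
    ‖∑ i ∈ s, F i‖ₑ ^ p ≤ ∑ i ∈ s, ‖F i‖ₑ ^ p :=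
  (ENNReal.rpow_le_rpow (enorm_sum_le s F) hp0.le).trans (ENNReal.rpow_sum_le_sum_rpow s _ hp0 hp1)

theorem enorm_add_rpow_le (a b : E) (hp0 : 0 ≤ p) (hp1 : p ≤ 1) :
    ‖a + b‖ₑ ^ p ≤ ‖a‖ₑ ^ p + ‖b‖ₑ ^ p :=
  (ENNReal.rpow_le_rpow (enorm_add_le a b) hp0).trans (ENNReal.rpow_add_le_add_rpow _ _ hp0 hp1)

theorem enorm_rpow_le_ofReal_rpow {r : ℝ} (hp : 0 ≤ p) {z : E} (hz : ‖z‖ ≤ r) :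
    ‖z‖ₑ ^ p ≤ ENNReal.ofReal r ^ p :=
  ENNReal.rpow_le_rpow (by rw [← ofReal_norm]; exact ofReal_le_ofReal hz) hp

theorem eLpNorm_ofReal_rpow {α : Type*} [MeasurableSpace α] {μ : Measure α} (hp : 0 < p)
    (F : α → E) : eLpNorm F (ENNReal.ofReal p) μ ^ p = ∫⁻ x, ‖F x‖ₑ ^ p ∂μ := by
  rw [eLpNorm_eq_lintegral_rpow_enorm_toReal (by simpa using hp) ofReal_ne_top, toReal_ofReal hp.le,
    ← ENNReal.rpow_mul, one_div_mul_cancel hp.ne', ENNReal.rpow_one]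

end PowerSubadditivity

theorem Function.Periodic.iteratedDeriv {E : Type*} [NormedAddCommGroup E] [NormedSpace ℝ E]
    {f : ℝ → E} {T : ℝ} (hf : Periodic f T) (n : ℕ) : Periodic (iteratedDeriv n f) T := by
  intro x
  have h := congrFun (iteratedDeriv_comp_add_const (n := n) (f := f) (s := T)) x
  rwa [show (fun z => f (z + T)) = f from funext hf, eq_comm] at h

section SmoothStep

structure IsSmoothStep (τ : ℝ → ℝ) (a b : ℝ) : Prop where
  contDiff : ContDiff ℝ ∞ τ
  nonneg : ∀ x, 0 ≤ τ x
  le_one : ∀ x, τ x ≤ 1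
  eq_zero : ∀ x ≤ a, τ x = 0
  eq_one : ∀ x, b ≤ x → τ x = 1

theorem deriv_smoothTransition_eq_zero {x : ℝ} (hx : x ∉ Icc 0 1) :
    deriv smoothTransition x = 0 := by
  rcases not_and_or.1 hx with hx | hx
  · have : smoothTransition =ᶠ[𝓝 x] fun _ => 0 := by
      filter_upwards [Iio_mem_nhds (not_le.1 hx)] with y hy
      exact smoothTransition.zero_of_nonpos hy.le
    rw [this.deriv_eq, deriv_const]
  · have : smoothTransition =ᶠ[𝓝 x] fun _ => 1 := by
      filter_upwards [Ioi_mem_nhds (not_le.1 hx)] with y hy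
      exact smoothTransition.one_of_one_le hy.le
    rw [this.deriv_eq, deriv_const]

theorem exists_norm_deriv_smoothTransition_le : ∃ C, ∀ x, ‖deriv smoothTransition x‖ ≤ C :=
  (smoothTransition.contDiff (n := ⊤).continuous_deriv (by simp)).bounded_above_of_compact_support
    (HasCompactSupport.intro isCompact_Icc fun _ => deriv_smoothTransition_eq_zero)

theorem enorm_deriv_smoothTransition_comp_rpow_le {p C a w : ℝ} (hp : 0 < p) (hw : 0 < w)
    (hC : ∀ x, ‖deriv smoothTransition x‖ ≤ C) (x : ℝ) :
    ‖deriv (fun x => smoothTransition ((x - a) / w)) x‖ₑ ^ p ≤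
      (Icc a (a + w)).indicator (fun _ => ENNReal.ofReal ((C / w) ^ p)) x := by
  have hderiv : deriv (fun x => smoothTransition ((x - a) / w)) x =
      deriv smoothTransition ((x - a) / w) * (1 / w) :=
    ((smoothTransition.contDiff (n := 1).differentiable one_ne_zero).differentiableAt.hasDerivAt
      |>.comp x (((hasDerivAt_id x).sub_const a).div_const w)).deriv
  rw [hderiv]
  by_cases hx : x ∈ Icc a (a + w)
  · rw [indicator_of_mem hx, ← ofReal_norm, ENNReal.ofReal_rpow_of_nonneg (norm_nonneg _) hp.le]
    gcongr
    rw [norm_mul, norm_div, norm_one, Real.norm_of_nonneg hw.le, mul_one_div]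
    gcongr
    exact hC _
  · have : (x - a) / w ∉ Icc 0 1 := by
      rintro ⟨h0, h1⟩
      exact hx ⟨by linarith [(le_div_iff₀ hw).1 h0], by linarith [(div_le_one hw).1 h1]⟩
    simp [deriv_smoothTransition_eq_zero this, ENNReal.zero_rpow_of_pos hp]

theorem exists_isSmoothStep_lintegral_deriv_rpow_lt {p : ℝ} (hp0 : 0 < p) (hp1 : p < 1) {a b : ℝ}
    (hab : a < b) {ε : ℝ≥0∞} (hε : 0 < ε) :
    ∃ τ, IsSmoothStep τ a b ∧ ∫⁻ x, ‖deriv τ x‖ₑ ^ p < ε := by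
  obtain ⟨C, hC⟩ := exists_norm_deriv_smoothTransition_le
  have hC0 : 0 ≤ C := (norm_nonneg _).trans (hC 0)
  -- squeezing the transition into width `w` costs at most `C^p w^(1-p)`, small since `p < 1`
  have hlim : Tendsto (fun w : ℝ => ENNReal.ofReal (C ^ p * w ^ (1 - p))) (𝓝[>] 0) (𝓝 0) := by
    have hcont : ContinuousAt (fun w : ℝ => C ^ p * w ^ (1 - p)) 0 :=
      continuousAt_const.mul (Real.continuousAt_rpow_const _ _ (Or.inr (by linarith)))
    simpa [Function.comp_def, Real.zero_rpow (by linarith : (1 - p) ≠ 0)] using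
      ((ENNReal.continuous_ofReal.tendsto _).comp hcont.tendsto).mono_left nhdsWithin_le_nhds
  obtain ⟨w, hwε, hw0, hwb⟩ :=
    ((hlim.eventually (gt_mem_nhds hε)).and (Ioc_mem_nhdsGT (sub_pos.2 hab))).exists
  refine ⟨fun x => smoothTransition ((x - a) / w),
    ⟨smoothTransition.contDiff.comp ((contDiff_id.sub contDiff_const).div_const w),
      fun _ => smoothTransition.nonneg _, fun _ => smoothTransition.le_one _,
      fun x hx => smoothTransition.zero_of_nonpos
        (div_nonpos_of_nonpos_of_nonneg (by linarith) hw0.le),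
      fun x hx => smoothTransition.one_of_one_le ((one_le_div hw0).2 (by linarith))⟩, ?_⟩
  calc ∫⁻ x, ‖deriv (fun x => smoothTransition ((x - a) / w)) x‖ₑ ^ p
      ≤ ∫⁻ x, (Icc a (a + w)).indicator (fun _ => ENNReal.ofReal ((C / w) ^ p)) x :=
        lintegral_mono (enorm_deriv_smoothTransition_comp_rpow_le hp0 hw0 hC)
    _ = ENNReal.ofReal ((C / w) ^ p) * ENNReal.ofReal w := by
        rw [lintegral_indicator_const measurableSet_Icc, Real.volume_Icc, add_sub_cancel_left]
    _ = ENNReal.ofReal (C ^ p * w ^ (1 - p)) := by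
        rw [← ofReal_mul (by positivity), div_rpow hC0 hw0.le, rpow_sub hw0, Real.rpow_one]
        congr 1
        field_simp
    _ < ε := hwε

end SmoothStep

section MovingAverage

def movingAverage (s : ℝ) (τ : ℝ → ℝ) (x : ℝ) : ℝ := s⁻¹ * ∫ t in x - s..x, τ t

variable {s : ℝ} {τ : ℝ → ℝ}

theorem hasDerivAt_movingAverage (hτ : Continuous τ) (x : ℝ) :
    HasDerivAt (movingAverage s τ) (s⁻¹ * (τ x - τ (x - s))) x := by
  have hprim (y : ℝ) : HasDerivAt (fun u => ∫ t in (0 : ℝ)..u, τ t) (τ y) y :=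
    (hτ.integral_hasStrictDerivAt 0 y).hasDerivAt
  have heq : movingAverage s τ =
      fun y => s⁻¹ * ((∫ t in (0 : ℝ)..y, τ t) - ∫ t in (0 : ℝ)..(y - s), τ t) := by
    funext y
    rw [movingAverage,
      integral_interval_sub_left (hτ.intervalIntegrable _ _) (hτ.intervalIntegrable _ _)]
  rw [heq]
  exact ((hprim x).sub ((hprim (x - s)).comp_sub_const x s)).const_mul s⁻¹

theorem deriv_movingAverage (hτ : Continuous τ) :
    deriv (movingAverage s τ) = fun x => s⁻¹ * (τ x - τ (x - s)) :=
  funext fun x => (hasDerivAt_movingAverage hτ x).deriv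

theorem IsSmoothStep.movingAverage {a b : ℝ} (hτ : IsSmoothStep τ a b) (hs : 0 < s) :
    IsSmoothStep (_root_.movingAverage s τ) a (b + s) := by
  have hc := hτ.contDiff.continuous
  refine ⟨?_, fun x => ?_, fun x => ?_, fun x hx => ?_, fun x hx => ?_⟩
  · refine contDiff_infty_iff_deriv.2
      ⟨fun x => (hasDerivAt_movingAverage hc x).differentiableAt, ?_⟩
    rw [deriv_movingAverage hc]
    exact contDiff_const.mul (hτ.contDiff.sub (hτ.contDiff.comp (contDiff_id.sub contDiff_const)))
  · exact mul_nonneg (inv_nonneg.2 hs.le) (integral_nonneg (by linarith) fun t _ => hτ.nonneg t)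
  · calc _root_.movingAverage s τ x = s⁻¹ * ∫ t in x - s..x, τ t := rfl
      _ ≤ s⁻¹ * ∫ t in x - s..x, (1 : ℝ) := by
          gcongr
          exact integral_mono_on (by linarith) (hc.intervalIntegrable _ _)
            intervalIntegrable_const fun t _ => hτ.le_one t
      _ = 1 := by simp [hs.ne']
  · have : ∫ t in x - s..x, τ t = ∫ t in x - s..x, (0 : ℝ) := integral_congr fun t ht => by
      rw [uIcc_of_le (by linarith)] at ht
      exact hτ.eq_zero t (ht.2.trans hx)
    simp [_root_.movingAverage, this]
  · have : ∫ t in x - s..x, τ t = ∫ t in x - s..x, (1 : ℝ) := integral_congr fun t ht => by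
      rw [uIcc_of_le (by linarith)] at ht
      exact hτ.eq_one t (by linarith [ht.1])
    simp [_root_.movingAverage, this, hs.ne']

theorem iteratedDeriv_succ_movingAverage (hτ : ContDiff ℝ ∞ τ) (n : ℕ) (x : ℝ) :
    iteratedDeriv (n + 1) (movingAverage s τ) x =
      s⁻¹ * (iteratedDeriv n τ x - iteratedDeriv n τ (x - s)) := by
  have hτn : ContDiff ℝ n τ := hτ.of_le (by exact_mod_cast le_top)
  rw [iteratedDeriv_succ', deriv_movingAverage hτ.continuous,
    iteratedDeriv_const_mul_field s⁻¹ (fun x => τ x - τ (x - s)),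
    iteratedDeriv_fun_sub (f := τ) (g := fun x => τ (x - s)) hτn.contDiffAt
      (hτn.comp (contDiff_id.sub contDiff_const)).contDiffAt,
    iteratedDeriv_comp_sub_const]

theorem lintegral_iteratedDeriv_succ_movingAverage_le {p : ℝ} (hp0 : 0 ≤ p) (hp1 : p ≤ 1)
    (hτ : ContDiff ℝ ∞ τ) (n : ℕ) :
    ∫⁻ x, ‖iteratedDeriv (n + 1) (movingAverage s τ) x‖ₑ ^ p ≤
      2 * ‖s⁻¹‖ₑ ^ p * ∫⁻ x, ‖iteratedDeriv n τ x‖ₑ ^ p := by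
  set D := iteratedDeriv n τ
  have hD : Measurable fun x => ‖D x‖ₑ ^ p :=
    (hτ.continuous_iteratedDeriv n (by exact_mod_cast le_top)).measurable.enorm.pow_const p
  calc ∫⁻ x, ‖iteratedDeriv (n + 1) (movingAverage s τ) x‖ₑ ^ p
      ≤ ∫⁻ x, ‖s⁻¹‖ₑ ^ p * (‖D x‖ₑ ^ p + ‖D (x - s)‖ₑ ^ p) := lintegral_mono fun x => by
        rw [iteratedDeriv_succ_movingAverage hτ, enorm_mul, ENNReal.mul_rpow_of_nonneg _ _ hp0,
          sub_eq_add_neg]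
        gcongr
        simpa using enorm_add_rpow_le (D x) (-D (x - s)) hp0 hp1
    _ = ‖s⁻¹‖ₑ ^ p * ((∫⁻ x, ‖D x‖ₑ ^ p) + ∫⁻ x, ‖D (x - s)‖ₑ ^ p) := by
        rw [lintegral_const_mul _ (f := fun x => ‖D x‖ₑ ^ p + ‖D (x - s)‖ₑ ^ p)
          (hD.add (hD.comp (measurable_sub_const s))), lintegral_add_left hD]
    _ = 2 * ‖s⁻¹‖ₑ ^ p * ∫⁻ x, ‖D x‖ₑ ^ p := by
        rw [lintegral_sub_right_eq_self (fun x => ‖D x‖ₑ ^ p) s]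
        ring

end MovingAverage

theorem exists_isSmoothStep_lintegral_iteratedDeriv_rpow_lt {p : ℝ} (hp0 : 0 < p) (hp1 : p < 1)
    {n : ℕ} (hn : n ≠ 0) {a b : ℝ} (hab : a < b) {ε : ℝ≥0∞} (hε : 0 < ε) :
    ∃ τ, IsSmoothStep τ a b ∧ ∫⁻ x, ‖iteratedDeriv n τ x‖ₑ ^ p < ε := by
  obtain ⟨k, rfl⟩ := Nat.exists_eq_succ_of_ne_zero hn
  clear hn
  induction k generalizing b ε with
  | zero => simpa using exists_isSmoothStep_lintegral_deriv_rpow_lt hp0 hp1 hab hε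
  | succ k ih =>
    set s := (b - a) / 2 with hs_def
    have hs : 0 < s := by rw [hs_def]; linarith
    have hK : 2 * ‖s⁻¹‖ₑ ^ p ≠ ⊤ :=
      mul_ne_top ofNat_ne_top (rpow_ne_top_of_nonneg hp0.le enorm_ne_top)
    obtain ⟨τ, hτ, hcost⟩ := ih (b := a + s) (by linarith) (ENNReal.div_pos hε.ne' hK)
    refine ⟨movingAverage s τ, by convert hτ.movingAverage hs using 1; rw [hs_def]; ring, ?_⟩
    calc _ ≤ 2 * ‖s⁻¹‖ₑ ^ p * ∫⁻ x, ‖iteratedDeriv (k + 1) τ x‖ₑ ^ p :=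
          lintegral_iteratedDeriv_succ_movingAverage_le hp0.le hp1.le hτ.contDiff (k + 1)
      _ < ε := ENNReal.mul_lt_of_lt_div' hcost

section Staircase

variable {E : Type*} [NormedAddCommGroup E] [NormedSpace ℝ E]

def staircase (τ : ℝ → ℝ) (L : ℝ) (v : ℕ → E) (N : ℕ) (x : ℝ) : E :=
  v 0 + ∑ i ∈ Finset.range N, τ (x - i * L) • (v (i + 1) - v i)

variable {τ : ℝ → ℝ} {a b L : ℝ} {v : ℕ → E} {N : ℕ}

theorem contDiff_staircase (hτ : ContDiff ℝ ∞ τ) : ContDiff ℝ ∞ (staircase τ L v N) :=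
  contDiff_const.add <| ContDiff.sum fun _ _ =>
    (hτ.comp (contDiff_id.sub contDiff_const)).smul contDiff_const

theorem staircase_of_le (hτ : IsSmoothStep τ a b) (hL : 0 ≤ L) {x : ℝ} (hx : x ≤ a) :
    staircase τ L v N x = v 0 := by
  rw [staircase, Finset.sum_eq_zero fun i _ => ?_, add_zero]
  rw [hτ.eq_zero _ ((sub_le_self _ (by positivity)).trans hx), zero_smul]

theorem staircase_of_ge (hτ : IsSmoothStep τ a b) (hL : 0 ≤ L) {x : ℝ}
    (hx : N * L - L + b ≤ x) : staircase τ L v N x = v N := by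
  rw [staircase, Finset.sum_congr rfl fun i hi => ?_, Finset.sum_range_sub, add_sub_cancel]
  have : (i : ℝ) + 1 ≤ N := by exact_mod_cast Finset.mem_range.1 hi
  rw [hτ.eq_one _ (by nlinarith), one_smul]

theorem staircase_of_mem_Icc (hτ : IsSmoothStep τ a b) (ha : 0 ≤ a) (hb : b ≤ L) {i : ℕ}
    (hi : i < N) {x : ℝ} (hx : x ∈ Icc (i * L) ((i + 1) * L)) :
    staircase τ L v N x = v i + τ (x - i * L) • (v (i + 1) - v i) := by
  have hL : 0 ≤ L := by nlinarith [hx.1.trans hx.2]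
  have hbelow : ∀ j ∈ Finset.range i, τ (x - j * L) • (v (j + 1) - v j) = v (j + 1) - v j := by
    intro j hj
    have : (j : ℝ) + 1 ≤ i := by exact_mod_cast Finset.mem_range.1 hj
    rw [hτ.eq_one _ (by nlinarith [hx.1]), one_smul]
  have habove : ∀ j ∈ Finset.Ico (i + 1) N, τ (x - j * L) • (v (j + 1) - v j) = 0 := by
    intro j hj
    have : (i : ℝ) + 1 ≤ j := by exact_mod_cast (Finset.mem_Ico.1 hj).1
    rw [hτ.eq_zero _ (by nlinarith [hx.2]), zero_smul]
  rw [staircase, ← Finset.sum_range_add_sum_Ico _ hi, Finset.sum_range_succ,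
    Finset.sum_congr rfl hbelow, Finset.sum_range_sub, Finset.sum_eq_zero habove]
  abel

theorem norm_staircase_sub_le (hτ : IsSmoothStep τ a b) (ha : 0 ≤ a) (hb : b ≤ L) {i : ℕ}
    (hi : i < N) {x : ℝ} (hx : x ∈ Icc (i * L) ((i + 1) * L)) (y : E) :
    ‖staircase τ L v N x - y‖ ≤ max ‖v i - y‖ ‖v (i + 1) - y‖ := by
  rw [staircase_of_mem_Icc hτ ha hb hi hx, ← dist_eq_norm, ← Metric.mem_closedBall]
  refine (convex_closedBall y _).add_smul_sub_mem ?_ ?_ ⟨hτ.nonneg _, hτ.le_one _⟩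
  · rw [Metric.mem_closedBall, dist_eq_norm]; exact le_max_left _ _
  · rw [Metric.mem_closedBall, dist_eq_norm]; exact le_max_right _ _

theorem iteratedDeriv_staircase (hτ : ContDiff ℝ ∞ τ) {n : ℕ} (hn : n ≠ 0) (x : ℝ) :
    iteratedDeriv n (staircase τ L v N) x =
      ∑ i ∈ Finset.range N, iteratedDeriv n τ (x - i * L) • (v (i + 1) - v i) := by
  have hshift (i : ℕ) : ContDiff ℝ n fun x => τ (x - i * L) :=
    (hτ.of_le (by exact_mod_cast le_top)).comp (contDiff_id.sub contDiff_const)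
  unfold staircase
  rw [iteratedDeriv_const_add (Nat.pos_of_ne_zero hn),
    iteratedDeriv_fun_sum (f := fun (i : ℕ) x => τ (x - i * L) • (v (i + 1) - v i))
      fun i _ => ((hshift i).smul contDiff_const).contDiffAt]
  refine Finset.sum_congr rfl fun i _ => ?_
  rw [iteratedDeriv_smul_const (hshift i).contDiffAt, iteratedDeriv_comp_sub_const]

theorem lintegral_iteratedDeriv_staircase_le {p : ℝ} (hp0 : 0 < p) (hp1 : p ≤ 1)
    (hτ : ContDiff ℝ ∞ τ) {n : ℕ} (hn : n ≠ 0) :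
    ∫⁻ x, ‖iteratedDeriv n (staircase τ L v N) x‖ₑ ^ p ≤
      (∑ i ∈ Finset.range N, ‖v (i + 1) - v i‖ₑ ^ p) * ∫⁻ x, ‖iteratedDeriv n τ x‖ₑ ^ p := by
  have hD : Measurable fun x => ‖iteratedDeriv n τ x‖ₑ ^ p :=
    (hτ.continuous_iteratedDeriv n (by exact_mod_cast le_top)).measurable.enorm.pow_const p
  calc ∫⁻ x, ‖iteratedDeriv n (staircase τ L v N) x‖ₑ ^ p
      ≤ ∫⁻ x, ∑ i ∈ Finset.range N,
          ‖v (i + 1) - v i‖ₑ ^ p * ‖iteratedDeriv n τ (x - i * L)‖ₑ ^ p := by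
        refine lintegral_mono fun x => ?_
        rw [iteratedDeriv_staircase hτ hn]
        refine (enorm_sum_rpow_le _ _ hp0 hp1).trans (Finset.sum_le_sum fun i _ => le_of_eq ?_)
        rw [enorm_smul, ENNReal.mul_rpow_of_nonneg _ _ hp0.le, mul_comm]
    _ = ∑ i ∈ Finset.range N,
          ‖v (i + 1) - v i‖ₑ ^ p * ∫⁻ x, ‖iteratedDeriv n τ (x - i * L)‖ₑ ^ p := by
        rw [lintegral_finsetSum _ (f := fun (i : ℕ) x =>
          ‖v (i + 1) - v i‖ₑ ^ p * ‖iteratedDeriv n τ (x - i * L)‖ₑ ^ p)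
          fun i _ => (hD.comp (measurable_sub_const _)).const_mul _]
        exact Finset.sum_congr rfl fun i _ =>
          lintegral_const_mul _ (hD.comp (measurable_sub_const _))
    _ = _ := by
        simp_rw [lintegral_sub_right_eq_self (fun x => ‖iteratedDeriv n τ x‖ₑ ^ p)]
        rw [Finset.sum_mul]

end Staircase

section Periodization

theorem periodic_comp_toIcoMod {α : Type*} {T : ℝ} (hT : 0 < T) (g : ℝ → α) :
    Periodic (g ∘ toIcoMod hT 0) T :=
  fun x => by simp only [comp_apply, toIcoMod_add_right]

theorem eqOn_comp_toIcoMod {α : Type*} {T : ℝ} (hT : 0 < T) (g : ℝ → α) :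
    EqOn (g ∘ toIcoMod hT 0) g (Ico 0 T) :=
  fun x hx => by rw [comp_apply, (toIcoMod_eq_self hT).2 (by rwa [zero_add])]

theorem comp_toIcoMod_ae_eq {α : Type*} {T : ℝ} (hT : 0 < T) (g : ℝ → α) :
    g ∘ toIcoMod hT 0 =ᵐ[volume.restrict (Icc 0 T)] g := by
  rw [← Measure.restrict_congr_set Ico_ae_eq_Icc]
  exact (ae_restrict_mem measurableSet_Ico).mono (eqOn_comp_toIcoMod hT g)

theorem iteratedDeriv_comp_toIcoMod_ae_eq {E : Type*} [NormedAddCommGroup E] [NormedSpace ℝ E]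
    {T : ℝ} (hT : 0 < T) (g : ℝ → E) (n : ℕ) :
    iteratedDeriv n (g ∘ toIcoMod hT 0) =ᵐ[volume.restrict (Icc 0 T)] iteratedDeriv n g := by
  rw [← Measure.restrict_congr_set Ioo_ae_eq_Icc]
  exact (ae_restrict_mem measurableSet_Ioo).mono
    (((eqOn_comp_toIcoMod hT g).mono Ioo_subset_Ico_self).iteratedDeriv_of_isOpen isOpen_Ioo n)

variable {E : Type*} [NormedAddCommGroup E] [NormedSpace ℝ E] {g : ℝ → E} {T : ℝ}

theorem contDiff_comp_toIcoMod {n : WithTop ℕ∞} (hT : 0 < T) {η : ℝ} (hη : 0 < η)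
    (hg : ContDiff ℝ n g) (hseam : ∀ x ∈ Ioo (-η) 0, g (x + T) = g x) :
    ContDiff ℝ n (g ∘ toIcoMod hT 0) := by
  refine contDiff_iff_contDiffAt.2 fun x => ?_
  obtain ⟨k, hk⟩ : ∃ k : ℤ, x - k • T ∈ Ico 0 T := ⟨toIcoDiv hT 0 x, by
    simpa only [self_sub_toIcoDiv_zsmul, zero_add] using toIcoMod_mem_Ico hT 0 x⟩
  have hloc : g ∘ toIcoMod hT 0 =ᶠ[𝓝 x] fun y => g (y - k • T) := by
    have hU : IsOpen {y | y - k • T ∈ Ioo (max (-η) (-T)) T} :=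
      isOpen_Ioo.preimage (_root_.continuous_sub_right _)
    filter_upwards [hU.mem_nhds ⟨(max_lt (by linarith) (by linarith)).trans_le hk.1, hk.2⟩]
      with y ⟨hy1, hy2⟩
    rw [max_lt_iff] at hy1
    rcases le_or_gt 0 (y - k • T) with h0 | h0
    · rw [comp_apply, (toIcoMod_eq_iff hT).2 ⟨⟨h0, by rwa [zero_add]⟩, k, by abel⟩]
    · rw [comp_apply, (toIcoMod_eq_iff hT (c := y - k • T + T)).2
        ⟨⟨by linarith, by linarith⟩, k - 1, by rw [sub_smul, one_smul]; abel⟩]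
      exact hseam _ ⟨hy1.1, h0⟩
  exact (hg.comp (contDiff_id.sub contDiff_const)).contDiffAt.congr_of_eventuallyEq hloc

end Periodization

section Approximation

variable {E : Type*}

/-- The last sample wraps around to `h 0`, so that a staircase through the samples returns to its
starting value. -/
def gridSample (h : ℝ → E) (T : ℝ) (N : ℕ) (j : ℕ) : E :=
  h (if j < N then j * (T / N) else 0)

theorem floor_div_lt_and_mem_Icc {x L : ℝ} {N : ℕ} (hL : 0 < L) (hx : x ∈ Ico 0 (N * L)) :
    ⌊x / L⌋₊ < N ∧ x ∈ Icc (⌊x / L⌋₊ * L) ((⌊x / L⌋₊ + 1) * L) :=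
  ⟨(Nat.floor_lt (div_nonneg hx.1 hL.le)).2 ((div_lt_iff₀ hL).2 hx.2),
    (le_div_iff₀ hL).1 (Nat.floor_le (div_nonneg hx.1 hL.le)),
    (div_le_iff₀ hL).1 (Nat.lt_floor_add_one _).le⟩

theorem mul_div_mem_Icc {T : ℝ} (hT : 0 ≤ T) {N j : ℕ} (hj : j ≤ N) (hN : N ≠ 0) :
    (j : ℝ) * (T / N) ∈ Icc 0 T := by
  refine ⟨by positivity, ?_⟩
  calc (j : ℝ) * (T / N) ≤ N * (T / N) := by gcongr
    _ = T := mul_div_cancel₀ _ (Nat.cast_ne_zero.2 hN)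

variable [NormedAddCommGroup E]

theorem norm_gridSample_le {h : ℝ → E} {T M : ℝ} (hT : 0 ≤ T) (hM : ∀ x ∈ Icc 0 T, ‖h x‖ ≤ M)
    (N j : ℕ) : ‖gridSample h T N j‖ ≤ M := by
  refine hM _ ?_
  split_ifs with hj
  exacts [mul_div_mem_Icc hT hj.le (by omega), ⟨le_rfl, hT⟩]

variable [NormedSpace ℝ E] {h : ℝ → E} {T M ε : ℝ} {N : ℕ} {τ : ℝ → ℝ} {a b : ℝ}

theorem norm_sub_staircase_gridSample_le_two_mul (hT : 0 < T) (hN : N ≠ 0)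
    (hτ : IsSmoothStep τ a b) (ha : 0 ≤ a) (hb : b ≤ T / N) (hM : ∀ x ∈ Icc 0 T, ‖h x‖ ≤ M)
    {x : ℝ} (hx : x ∈ Ico 0 T) :
    ‖h x - staircase τ (T / N) (gridSample h T N) N x‖ ≤ 2 * M := by
  obtain ⟨hi, hxi⟩ := floor_div_lt_and_mem_Icc (x := x) (L := T / N) (N := N) (by positivity)
    (by rwa [mul_div_cancel₀ _ (Nat.cast_ne_zero.2 hN)])
  have hhx := hM x (Ico_subset_Icc_self hx)
  rw [norm_sub_rev]
  refine (norm_staircase_sub_le hτ ha hb hi hxi _).trans (max_le ?_ ?_) <;>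
    refine (norm_sub_le _ _).trans ?_
  · linarith [norm_gridSample_le hT.le hM N ⌊x / (T / N)⌋₊]
  · linarith [norm_gridSample_le hT.le hM N (⌊x / (T / N)⌋₊ + 1)]

theorem norm_sub_staircase_gridSample_le (hT : 0 < T) (hN : N ≠ 0) (hτ : IsSmoothStep τ a b)
    (ha : 0 ≤ a) (hb : b ≤ T / N)
    (hunif : ∀ x ∈ Icc 0 T, ∀ y ∈ Icc 0 T, dist x y ≤ T / N → dist (h x) (h y) ≤ ε)
    {x : ℝ} (hx : x ∈ Ico 0 (T - T / N)) :
    ‖h x - staircase τ (T / N) (gridSample h T N) N x‖ ≤ ε := by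
  set L := T / N
  have hL : 0 < L := by positivity
  have hNL : N * L = T := mul_div_cancel₀ _ (Nat.cast_ne_zero.2 hN)
  have hxT : x ∈ Icc 0 T := ⟨hx.1, by linarith [hx.2]⟩
  obtain ⟨hi, hxi⟩ := floor_div_lt_and_mem_Icc (N := N) hL ⟨hx.1, by linarith [hx.2]⟩
  set i := ⌊x / L⌋₊
  have hi1 : i + 1 < N := by
    have : ((i : ℝ) + 1) * L < N * L := by nlinarith [hxi.1, hx.2]
    exact_mod_cast lt_of_mul_lt_mul_right this hL.le
  rw [norm_sub_rev]
  refine (norm_staircase_sub_le hτ ha hb hi hxi _).trans (max_le ?_ ?_) <;>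
    rw [← dist_eq_norm, gridSample]
  · rw [if_pos hi]
    exact hunif _ (mul_div_mem_Icc hT.le hi.le hN) x hxT
      (by rw [Real.dist_eq, abs_le]; constructor <;> nlinarith [hxi.1, hxi.2])
  · rw [if_pos hi1]
    exact hunif _ (mul_div_mem_Icc hT.le hi1.le hN) x hxT
      (by rw [Real.dist_eq, abs_le]; push_cast; constructor <;> nlinarith [hxi.1, hxi.2])

theorem lintegral_sub_staircase_gridSample_le {p : ℝ} (hp : 0 ≤ p) (hT : 0 < T) (hN : N ≠ 0)
    (hτ : IsSmoothStep τ a b) (ha : 0 ≤ a) (hb : b ≤ T / N) (hM : ∀ x ∈ Icc 0 T, ‖h x‖ ≤ M)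
    (hunif : ∀ x ∈ Icc 0 T, ∀ y ∈ Icc 0 T, dist x y ≤ T / N → dist (h x) (h y) ≤ ε) :
    ∫⁻ x in Icc 0 T, ‖h x - staircase τ (T / N) (gridSample h T N) N x‖ₑ ^ p ≤
      ENNReal.ofReal ε ^ p * ENNReal.ofReal T +
        ENNReal.ofReal (2 * M) ^ p * ENNReal.ofReal (T / N) := by
  set F := fun x => ‖h x - staircase τ (T / N) (gridSample h T N) N x‖ₑ ^ p
  have hL : 0 < T / N := by positivity
  have hLT : T / N ≤ T := div_le_self hT.le (by exact_mod_cast Nat.one_le_iff_ne_zero.2 hN)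
  calc ∫⁻ x in Icc 0 T, F x = ∫⁻ x in Ico 0 (T - T / N) ∪ Ico (T - T / N) T, F x := by
        rw [Ico_union_Ico_eq_Ico (by linarith) (by linarith)]
        exact setLIntegral_congr Ico_ae_eq_Icc.symm
    _ ≤ (∫⁻ x in Ico 0 (T - T / N), F x) + ∫⁻ x in Ico (T - T / N) T, F x :=
        lintegral_union_le _ _ _
    _ ≤ (∫⁻ _ in Ico 0 (T - T / N), ENNReal.ofReal ε ^ p) +
          ∫⁻ _ in Ico (T - T / N) T, ENNReal.ofReal (2 * M) ^ p := by
        refine add_le_add (setLIntegral_mono measurable_const fun x hx =>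
          enorm_rpow_le_ofReal_rpow hp
            (norm_sub_staircase_gridSample_le hT hN hτ ha hb hunif hx)) ?_
        exact setLIntegral_mono measurable_const fun x hx =>
          enorm_rpow_le_ofReal_rpow hp (norm_sub_staircase_gridSample_le_two_mul hT hN hτ ha hb hM
            ⟨by linarith [hx.1], hx.2⟩)
    _ ≤ _ := by
        rw [setLIntegral_const, setLIntegral_const, Real.volume_Ico, Real.volume_Ico,
          _root_.sub_sub_cancel, sub_zero]
        gcongr
        linarith

theorem exists_lintegral_sub_staircase_gridSample_lt {p : ℝ} (hp : 0 < p) (hT : 0 < T)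
    (hh : ContinuousOn h (Icc 0 T)) {ε : ℝ≥0∞} (hε : 0 < ε) :
    ∃ N : ℕ, N ≠ 0 ∧ ∀ τ a b, IsSmoothStep τ a b → 0 ≤ a → b ≤ T / N →
      ∫⁻ x in Icc 0 T, ‖h x - staircase τ (T / N) (gridSample h T N) N x‖ₑ ^ p < ε := by
  obtain ⟨M, hM⟩ := isCompact_Icc.exists_bound_of_continuousOn hh
  have hε2 : 0 < ε / 2 := ENNReal.half_pos hε.ne'
  obtain ⟨η, hηε, hη⟩ : ∃ η : ℝ, ENNReal.ofReal η ^ p * ENNReal.ofReal T < ε / 2 ∧ 0 < η := by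
    have h0 : Tendsto (fun t : ℝ => ENNReal.ofReal t ^ p) (𝓝 0) (𝓝 (ENNReal.ofReal 0 ^ p)) :=
      (ENNReal.continuous_rpow_const.comp ENNReal.continuous_ofReal).tendsto 0
    have : Tendsto (fun t : ℝ => ENNReal.ofReal t ^ p * ENNReal.ofReal T) (𝓝[>] 0) (𝓝 0) := by
      simpa [ENNReal.zero_rpow_of_pos hp] using (ENNReal.Tendsto.mul_const h0
        (b := ENNReal.ofReal T) (Or.inr ofReal_ne_top)).mono_left nhdsWithin_le_nhds
    exact ((this.eventually (gt_mem_nhds hε2)).and self_mem_nhdsWithin).exists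
  obtain ⟨δ, hδ, hunif⟩ := Metric.uniformContinuousOn_iff_le.1
    (isCompact_Icc.uniformContinuousOn_of_continuous hh) η hη
  have hmesh : Tendsto (fun N : ℕ => T / N) atTop (𝓝 0) := tendsto_const_div_atTop_nhds_zero_nat T
  have hlast : Tendsto (fun N : ℕ => ENNReal.ofReal (2 * M) ^ p * ENNReal.ofReal (T / N)) atTop
      (𝓝 0) := by
    simpa using ENNReal.Tendsto.const_mul (ENNReal.tendsto_ofReal hmesh)
      (a := ENNReal.ofReal (2 * M) ^ p) (Or.inr (rpow_ne_top_of_nonneg hp.le ofReal_ne_top))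
  obtain ⟨N, ⟨hNε, hNδ⟩, hN⟩ := (((hlast.eventually (gt_mem_nhds hε2)).and
    (hmesh.eventually (ge_mem_nhds hδ))).and (eventually_ne_atTop 0)).exists
  refine ⟨N, hN, fun τ a b hτ ha hb => ?_⟩
  calc _ ≤ ENNReal.ofReal η ^ p * ENNReal.ofReal T +
        ENNReal.ofReal (2 * M) ^ p * ENNReal.ofReal (T / N) :=
        lintegral_sub_staircase_gridSample_le hp.le hT hN hτ ha hb hM
          fun x hx y hy hxy => hunif x hx y hy (hxy.trans hNδ)
    _ < ε / 2 + ε / 2 := ENNReal.add_lt_add hηε hNε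
    _ = ε := ENNReal.add_halves ε

theorem contDiff_staircase_gridSample_comp_toIcoMod (hT : 0 < T) (hN : N ≠ 0)
    (hτ : IsSmoothStep τ (T / N / 3) (2 * (T / N) / 3)) :
    ContDiff ℝ ∞ (staircase τ (T / N) (gridSample h T N) N ∘ toIcoMod hT 0) := by
  have hL : 0 < T / N := by positivity
  have hNL : N * (T / N) = T := mul_div_cancel₀ _ (Nat.cast_ne_zero.2 hN)
  refine contDiff_comp_toIcoMod hT (η := T / N / 3) (by positivity)
    (contDiff_staircase hτ.contDiff) fun x hx => ?_
  rw [staircase_of_ge hτ hL.le (by linarith [hx.1]), staircase_of_le hτ hL.le (by linarith [hx.2])]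
  simp [gridSample]

end Approximation

section Density

variable {E : Type*} [NormedAddCommGroup E] [NormedSpace ℝ E] {p : ℝ}

theorem exists_contDiff_periodic_approx_of_continuousOn {h : ℝ → E} {T : ℝ} (hT : 0 < T)
    (hh : ContinuousOn h (Icc 0 T)) (hp0 : 0 < p) (hp1 : p < 1) {n : ℕ} (hn : n ≠ 0)
    {ε : ℝ≥0∞} (hε : 0 < ε) :
    ∃ g : ℝ → E, ContDiff ℝ ∞ g ∧ Periodic g T ∧
      ∫⁻ x in Icc 0 T, ‖h x - g x‖ₑ ^ p < ε ∧ ∫⁻ x in Icc 0 T, ‖iteratedDeriv n g x‖ₑ ^ p < ε := by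
  obtain ⟨N, hN, hstair⟩ := exists_lintegral_sub_staircase_gridSample_lt hp0 hT hh hε
  set L := T / N
  have hL : 0 < L := by positivity
  set v := gridSample h T N
  have hvS : ∑ i ∈ Finset.range N, ‖v (i + 1) - v i‖ₑ ^ p ≠ ⊤ :=
    ENNReal.sum_ne_top.2 fun i _ => rpow_ne_top_of_nonneg hp0.le enorm_ne_top
  obtain ⟨τ, hτ, hτε⟩ := exists_isSmoothStep_lintegral_iteratedDeriv_rpow_lt hp0 hp1 hn
    (a := L / 3) (b := 2 * L / 3) (by linarith) (ENNReal.div_pos hε.ne' hvS)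
  set S := staircase τ L v N
  refine ⟨S ∘ toIcoMod hT 0, contDiff_staircase_gridSample_comp_toIcoMod hT hN hτ,
    periodic_comp_toIcoMod hT S, ?_, ?_⟩
  · calc ∫⁻ x in Icc 0 T, ‖h x - (S ∘ toIcoMod hT 0) x‖ₑ ^ p
        = ∫⁻ x in Icc 0 T, ‖h x - S x‖ₑ ^ p := lintegral_congr_ae <| by
          filter_upwards [comp_toIcoMod_ae_eq hT S] with x hx
          rw [hx]
      _ < ε := hstair τ _ _ hτ (by positivity) (by linarith)
  · calc ∫⁻ x in Icc 0 T, ‖iteratedDeriv n (S ∘ toIcoMod hT 0) x‖ₑ ^ p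
        = ∫⁻ x in Icc 0 T, ‖iteratedDeriv n S x‖ₑ ^ p := lintegral_congr_ae <| by
          filter_upwards [iteratedDeriv_comp_toIcoMod_ae_eq hT S n] with x hx
          rw [hx]
      _ ≤ ∫⁻ x, ‖iteratedDeriv n S x‖ₑ ^ p := setLIntegral_le_lintegral _ _
      _ ≤ (∑ i ∈ Finset.range N, ‖v (i + 1) - v i‖ₑ ^ p) * ∫⁻ x, ‖iteratedDeriv n τ x‖ₑ ^ p :=
          lintegral_iteratedDeriv_staircase_le hp0 hp1.le hτ.contDiff hn
      _ < ε := ENNReal.mul_lt_of_lt_div' hτε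

theorem exists_continuous_setLIntegral_sub_rpow_lt {f : ℝ → E} {s : Set ℝ} (hs : MeasurableSet s)
    (hp : 0 < p) (hf : MemLp f (ENNReal.ofReal p) (volume.restrict s)) {ε : ℝ≥0∞} (hε : 0 < ε) :
    ∃ h : ℝ → E, Continuous h ∧ ∫⁻ x in s, ‖f x - h x‖ₑ ^ p < ε := by
  obtain ⟨c, hc, hcε⟩ := ENNReal.exists_pos_rpow_lt hp hε
  obtain ⟨h, -, hfh, hh, -⟩ := ((memLp_indicator_iff_restrict hs).2 hf)
    |>.exists_hasCompactSupport_eLpNorm_sub_le ofReal_ne_top hc.ne'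
  refine ⟨h, hh, ?_⟩
  calc ∫⁻ x in s, ‖f x - h x‖ₑ ^ p = ∫⁻ x in s, ‖(s.indicator f - h) x‖ₑ ^ p :=
        setLIntegral_congr_fun hs fun x hx => by simp [indicator_of_mem hx]
    _ ≤ ∫⁻ x, ‖(s.indicator f - h) x‖ₑ ^ p := setLIntegral_le_lintegral _ _
    _ = eLpNorm (s.indicator f - h) (ENNReal.ofReal p) volume ^ p := (eLpNorm_ofReal_rpow hp _).symm
    _ ≤ c ^ p := ENNReal.rpow_le_rpow hfh hp.le
    _ < ε := hcε

theorem exists_contDiff_periodic_eLpNorm_sub_lt {f : ℝ → E} {T : ℝ} (hT : 0 < T) (hp0 : 0 < p)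
    (hp1 : p < 1) (hf : MemLp f (ENNReal.ofReal p) (volume.restrict (Icc 0 T))) {n : ℕ}
    (hn : n ≠ 0) {c : ℝ≥0∞} (hc : 0 < c) :
    ∃ g : ℝ → E, ContDiff ℝ ∞ g ∧ Periodic g T ∧
      eLpNorm (f - g) (ENNReal.ofReal p) (volume.restrict (Icc 0 T)) < c ∧
      eLpNorm (iteratedDeriv n g) (ENNReal.ofReal p) (volume.restrict (Icc 0 T)) < c := by
  have hc2 : 0 < c ^ p / 2 := ENNReal.half_pos (rpow_pos_of_nonneg hc hp0.le).ne'
  obtain ⟨h, hh, hfh⟩ := exists_continuous_setLIntegral_sub_rpow_lt measurableSet_Icc hp0 hf hc2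
  obtain ⟨g, hg, hgT, hhg, hgn⟩ :=
    exists_contDiff_periodic_approx_of_continuousOn hT hh.continuousOn hp0 hp1 hn hc2
  refine ⟨g, hg, hgT, ?_, ?_⟩ <;> rw [← ENNReal.rpow_lt_rpow_iff hp0, eLpNorm_ofReal_rpow hp0]
  · calc ∫⁻ x in Icc 0 T, ‖(f - g) x‖ₑ ^ p
        ≤ ∫⁻ x in Icc 0 T, ‖f x - h x‖ₑ ^ p + ‖h x - g x‖ₑ ^ p := lintegral_mono fun x => by
          simpa using enorm_add_rpow_le (f x - h x) (h x - g x) hp0.le hp1.le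
      _ = (∫⁻ x in Icc 0 T, ‖f x - h x‖ₑ ^ p) + ∫⁻ x in Icc 0 T, ‖h x - g x‖ₑ ^ p :=
          lintegral_add_right _ ((hh.sub hg.continuous).enorm.measurable.pow_const p)
      _ < c ^ p / 2 + c ^ p / 2 := ENNReal.add_lt_add hfh hhg
      _ = c ^ p := ENNReal.add_halves _
  · exact hgn.trans_le ENNReal.half_le_self

end Density

theorem Continuous.memLp_restrict_Icc {E : Type*} [NormedAddCommGroup E] {f : ℝ → E}
    (hf : Continuous f) {q : ℝ≥0∞} {a b : ℝ} : MemLp f q (volume.restrict (Icc a b)) := by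
  obtain ⟨C, hC⟩ := isCompact_Icc.exists_bound_of_continuousOn (hf.continuousOn (s := Icc a b))
  exact MemLp.of_bound hf.aestronglyMeasurable C
    ((ae_restrict_iff' measurableSet_Icc).2 (.of_forall hC))

theorem ContDiff.iteratedDeriv_eq_add_integral {E : Type*} [NormedAddCommGroup E]
    [NormedSpace ℝ E] [CompleteSpace E] {g : ℝ → E} (hg : ContDiff ℝ ∞ g) (n : ℕ) (x : ℝ) :
    iteratedDeriv n g x = iteratedDeriv n g 0 + ∫ t in (0 : ℝ)..x, iteratedDeriv (n + 1) g t := by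
  rw [integral_eq_sub_of_hasDerivAt (f := iteratedDeriv n g) (fun y _ => ?_)
    ((hg.continuous_iteratedDeriv _ (by exact_mod_cast le_top)).intervalIntegrable _ _)]
  · abel
  · rw [iteratedDeriv_succ]
    exact (hg.differentiable_iteratedDeriv n (by exact_mod_cast WithTop.coe_lt_top _)
      y).hasDerivAt

theorem K_functional_zero_circle_integer_general (p : ℝ) (hp0 : 0 < p) (hp1 : p < 1)
    (α : ℕ) (hα : 0 < α) (f : ℝ → ℂ)
    (hf : MemLp f (ENNReal.ofReal p) (volume.restrict (Set.Icc (0 : ℝ) (2 * π))))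
    (δ : ℝ) (ε : ℝ) (hε : 0 < ε) :
    ∃ g G : ℝ → ℂ, Function.Periodic g (2 * π) ∧ Function.Periodic G (2 * π) ∧
      IntegrableOn G (Set.Icc (0 : ℝ) (2 * π)) ∧ ContDiff ℝ (α - 1 : ℕ) g ∧
      MemLp G (ENNReal.ofReal p) (volume.restrict (Set.Icc (0 : ℝ) (2 * π))) ∧
      (∀ x : ℝ, iteratedDeriv (α - 1) g x =
        iteratedDeriv (α - 1) g 0 + ∫ t in (0 : ℝ)..x, G t) ∧
      eLpNorm (fun x => f x - g x) (ENNReal.ofReal p)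
            (volume.restrict (Set.Icc (0 : ℝ) (2 * π))) +
          ENNReal.ofReal δ * eLpNorm G (ENNReal.ofReal p)
            (volume.restrict (Set.Icc (0 : ℝ) (2 * π))) <
        ENNReal.ofReal ε := by
  obtain ⟨c, hcε, hc⟩ : ∃ c : ℝ≥0∞, c + ENNReal.ofReal δ * c < ENNReal.ofReal ε ∧ 0 < c := by
    have : Tendsto (fun c : ℝ≥0∞ => c + ENNReal.ofReal δ * c) (𝓝[>] 0) (𝓝 0) := by
      simpa using (tendsto_id.add (ENNReal.Tendsto.const_mul tendsto_id
        (Or.inr ofReal_ne_top))).mono_left (nhdsWithin_le_nhds (a := (0 : ℝ≥0∞)))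
    exact ((this.eventually (gt_mem_nhds (ofReal_pos.2 hε))).and self_mem_nhdsWithin).exists
  obtain ⟨g, hg, hgT, hfg, hG⟩ :=
    exists_contDiff_periodic_eLpNorm_sub_lt two_pi_pos hp0 hp1 hf hα.ne' hc
  have hGc : Continuous (iteratedDeriv α g) :=
    hg.continuous_iteratedDeriv α (by exact_mod_cast le_top)
  refine ⟨g, iteratedDeriv α g, hgT, hgT.iteratedDeriv α, hGc.integrableOn_Icc,
    hg.of_le (WithTop.coe_le_coe.2 le_top), hGc.memLp_restrict_Icc, fun x => ?_, ?_⟩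
  · simpa only [Nat.sub_add_cancel hα] using hg.iteratedDeriv_eq_add_integral (α - 1) x
  · calc _ < c + ENNReal.ofReal δ * c :=
          ENNReal.add_lt_add_of_lt_of_le (mul_ne_top ofReal_ne_top (ne_top_of_lt hG))
            hfg (by gcongr)
      _ < ENNReal.ofReal ε := hcε

/-- Main theorem on the circle for integer derivatives: for `0 < p < 1` and `α ∈ ℕ`,
the K-functional `inf_g (‖f - g‖_{L_p(T)} + δ ‖g^{(α)}‖_{L_p(T)})`, taken over all
`2π`-periodic `g` whose `(α-1)`-st derivative is absolutely continuous with
`g^{(α)} = G ∈ L_1(T) ∩ L_p(T)`, is identically zero. -/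
theorem K_functional_zero_circle_integer (p : ℝ) (hp0 : 0 < p) (hp1 : p < 1)
    (α : ℕ) (hα : 0 < α) (f : ℝ → ℂ)
    (hf : MemLp f (ENNReal.ofReal p) (volume.restrict (Set.Icc (0 : ℝ) (2 * π))))
    (δ : ℝ) (hδ : 0 < δ) (ε : ℝ) (hε : 0 < ε) :
    ∃ g G : ℝ → ℂ, Function.Periodic g (2 * π) ∧ Function.Periodic G (2 * π) ∧
      IntegrableOn G (Set.Icc (0 : ℝ) (2 * π)) ∧ ContDiff ℝ (α - 1 : ℕ) g ∧
      MemLp G (ENNReal.ofReal p) (volume.restrict (Set.Icc (0 : ℝ) (2 * π))) ∧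
      (∀ x : ℝ, iteratedDeriv (α - 1) g x =
        iteratedDeriv (α - 1) g 0 + ∫ t in (0 : ℝ)..x, G t) ∧
      eLpNorm (fun x => f x - g x) (ENNReal.ofReal p)
            (volume.restrict (Set.Icc (0 : ℝ) (2 * π))) +
          ENNReal.ofReal δ * eLpNorm G (ENNReal.ofReal p)
            (volume.restrict (Set.Icc (0 : ℝ) (2 * π))) <
        ENNReal.ofReal ε :=
  K_functional_zero_circle_integer_general p hp0 hp1 α hα f hf δ ε hε
end
end
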